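/- Let x ∈ l^2 be such that x_n < 0 for at most finitely many n. Then any two global Leray-Hopf solutions of the inviscid dyadic model with initial condition x coincide. -/

import Mathlib

/-!
Energy dissipation bounds both solutions uniformly: `|X n t| ≤ R := √(E 0)`. The equation for
`X (n + 1)` is linear in `X (n + 1)` with a nonnegative source `k n * X n ^ 2`, so nonnegative
components stay nonnegative; past the last negative initial component this gives the one-sided
bound `-k n * (X₁ (n + 1) + X₂ (n + 1)) ≤ K := C * 2 ^ n₀ * 2R`. For the difference, the weighted
distance `Φ = ∑ 2⁻ⁿ (X₁ n - X₂ n) ^ 2` has truncations whose derivative, after summation by parts,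
is at most `4CR² |X₁ N - X₂ N| + K Φ`. The boundary term integrates to zero as `N → ∞`, so
`Φ t ≤ K ∫₀ᵗ Φ`, and Grönwall forces `Φ = 0`.
-/

open MeasureTheory Set Filter Topology

/-- `X` is a solution of the inviscid dyadic model on the time set `D`
(typically `Set.Ico 0 T` or `Set.Ici 0`), with coefficients `k` bounded by `C * 2 ^ n`.
The components of the solution are `X 1, X 2, ...`; by convention `X 0 ≡ 0` and `k 0 = 0`. -/
def IsDyadicSolutionOn (C : ℝ) (k : ℕ → ℝ) (X : ℕ → ℝ → ℝ) (D : Set ℝ) : Prop :=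
  0 < C ∧ k 0 = 0 ∧
  (∀ n : ℕ, 1 ≤ n → 0 ≤ k n ∧ k n ≤ C * 2 ^ n) ∧
  (∀ t : ℝ, X 0 t = 0) ∧
  (∀ n : ℕ, 1 ≤ n → ∀ t ∈ D, HasDerivWithinAt (X n)
      (k (n - 1) * X (n - 1) t ^ 2 - k n * X n t * X (n + 1) t) D t) ∧
  (∀ t ∈ D, Summable fun j : ℕ => X (j + 1) t ^ 2)

/-- The energy `E(t) = ∑_{j ≥ 1} X_j(t)^2`. -/
noncomputable def energy (X : ℕ → ℝ → ℝ) (t : ℝ) : ℝ :=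
  ∑' j : ℕ, X (j + 1) t ^ 2

/-- The function `a(t) = sup_{n ≥ 1} (- k_n X_{n+1}(t))`. -/
noncomputable def classKfun (k : ℕ → ℝ) (X : ℕ → ℝ → ℝ) (t : ℝ) : ℝ :=
  ⨆ n : ℕ, -(k (n + 1) * X (n + 2) t)

/-- A solution is of class `K` if `a(t) = sup_{n ≥ 1} (- k_n X_{n+1}(t))` is locally
integrable on `[0,∞)`. -/
def IsClassK (k : ℕ → ℝ) (X : ℕ → ℝ → ℝ) : Prop :=
  LocallyIntegrableOn (classKfun k X) (Set.Ici 0)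

theorem exists_hasDerivAt_eq_integral_of_continuousOn_Ici {a : ℝ → ℝ}
    (ha : ContinuousOn a (Ici 0)) :
    ∃ A : ℝ → ℝ, ∀ t, 0 ≤ t → HasDerivAt A (a t) t ∧ A t = ∫ s in (0 : ℝ)..t, a s := by
  have hcont : Continuous fun s => a (max s 0) :=
    ha.comp_continuous (continuous_id.max continuous_const) fun s => le_max_right s 0
  refine ⟨fun u => ∫ s in (0 : ℝ)..u, a (max s 0), fun t ht => ⟨?_, ?_⟩⟩
  · simpa only [max_eq_left ht] using (hcont.integral_hasStrictDerivAt 0 t).hasDerivAt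
  · refine intervalIntegral.integral_congr fun s hs => ?_
    rw [uIcc_of_le ht] at hs
    simp only [max_eq_left hs.1]

theorem nonneg_of_hasDerivWithinAt_of_mul_le {y y' a : ℝ → ℝ} (ha : ContinuousOn a (Ici 0))
    (hy : ∀ t, 0 ≤ t → HasDerivWithinAt y (y' t) (Ici 0) t)
    (hle : ∀ t, 0 ≤ t → a t * y t ≤ y' t) (h0 : 0 ≤ y 0) {t : ℝ} (ht : 0 ≤ t) :
    0 ≤ y t := by
  obtain ⟨A, hA⟩ := exists_hasDerivAt_eq_integral_of_continuousOn_Ici ha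
  have hderiv : ∀ s, 0 < s → HasDerivAt (fun u => y u * Real.exp (-A u))
      (Real.exp (-A s) * (y' s - a s * y s)) s := by
    intro s hs
    exact (((hy s hs.le).hasDerivAt (Ici_mem_nhds hs)).mul (hA s hs.le).1.neg.exp).congr_deriv
      (by simp only [Pi.neg_apply]; ring)
  have hmono : MonotoneOn (fun u => y u * Real.exp (-A u)) (Ici 0) := by
    refine monotoneOn_of_hasDerivWithinAt_nonneg (convex_Ici 0)
      (f' := fun s => Real.exp (-A s) * (y' s - a s * y s))
      (fun s hs => (hy s hs).continuousWithinAt.mul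
        (hA s hs).1.neg.exp.continuousAt.continuousWithinAt) ?_ ?_ <;> rw [interior_Ici]
    · exact fun s hs => (hderiv s hs).hasDerivWithinAt
    · exact fun s hs => mul_nonneg (Real.exp_pos _).le (sub_nonneg.2 (hle s hs.le))
  have h : 0 ≤ y t * Real.exp (-A t) :=
    (mul_nonneg h0 (Real.exp_pos _).le).trans (hmono self_mem_Ici ht ht)
  exact (mul_nonneg_iff_of_pos_right (Real.exp_pos _)).1 h

theorem eq_zero_of_le_mul_integral {Φ : ℝ → ℝ} {K : ℝ} (hc : ContinuousOn Φ (Ici 0))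
    (hnn : ∀ t, 0 ≤ t → 0 ≤ Φ t) (hle : ∀ t, 0 ≤ t → Φ t ≤ K * ∫ s in (0 : ℝ)..t, Φ s)
    {t : ℝ} (ht : 0 ≤ t) : Φ t = 0 := by
  obtain ⟨I, hI⟩ := exists_hasDerivAt_eq_integral_of_continuousOn_Ici hc
  have hI_nonneg : ∀ s, 0 ≤ s → 0 ≤ I s := fun s hs =>
    (hI s hs).2 ▸ intervalIntegral.integral_nonneg hs fun u hu => hnn u hu.1
  have hI_zero : ∀ s ∈ Icc 0 t, I s = 0 := by
    refine eq_zero_of_abs_deriv_le_mul_abs_self_of_eq_zero_right (K := K)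
      (fun s hs => (hI s hs.1).1.continuousAt.continuousWithinAt)
      (fun s hs => (hI s hs.1).1.hasDerivWithinAt) (by simp [(hI 0 le_rfl).2]) fun s hs => ?_
    rw [Real.norm_eq_abs, Real.norm_eq_abs, abs_of_nonneg (hnn s hs.1),
      abs_of_nonneg (hI_nonneg s hs.1), (hI s hs.1).2]
    exact hle s hs.1
  refine le_antisymm ?_ (hnn t ht)
  simpa [← (hI t ht).2, hI_zero t ⟨ht, le_rfl⟩] using hle t ht

theorem tendsto_intervalIntegral_zero_of_abs_le {f : ℕ → ℝ → ℝ} {a b B : ℝ} (hab : a ≤ b)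
    (hf : ∀ N, ContinuousOn (f N) (Icc a b)) (hB : ∀ N, ∀ s ∈ Icc a b, |f N s| ≤ B)
    (hlim : ∀ s ∈ Icc a b, Tendsto (fun N => f N s) atTop (𝓝 0)) :
    Tendsto (fun N => ∫ s in a..b, f N s) atTop (𝓝 0) := by
  have hIoc : Set.uIoc a b ⊆ Icc a b := by rw [uIoc_of_le hab]; exact Ioc_subset_Icc_self
  simpa using intervalIntegral.tendsto_integral_filter_of_dominated_convergence (fun _ => B)
    (Eventually.of_forall fun N =>
      ((hf N).mono hIoc).aestronglyMeasurable measurableSet_uIoc)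
    (Eventually.of_forall fun N => ae_of_all _ fun s hs => hB N s (hIoc hs))
    intervalIntegrable_const (ae_of_all _ fun s hs => hlim s (hIoc hs))

namespace IsDyadicSolutionOn

variable {C : ℝ} {k : ℕ → ℝ} {X : ℕ → ℝ → ℝ} {D : Set ℝ}

theorem coeff_nonneg (h : IsDyadicSolutionOn C k X D) (n : ℕ) : 0 ≤ k n := by
  rcases Nat.eq_zero_or_pos n with rfl | hn
  · exact h.2.1.ge
  · exact (h.2.2.1 n hn).1

theorem coeff_le (h : IsDyadicSolutionOn C k X D) (n : ℕ) : k n ≤ C * 2 ^ n := by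
  rcases Nat.eq_zero_or_pos n with rfl | hn
  · simpa [h.2.1] using h.1.le
  · exact (h.2.2.1 n hn).2

theorem hasDerivWithinAt_succ (h : IsDyadicSolutionOn C k X D) (n : ℕ) {t : ℝ} (ht : t ∈ D) :
    HasDerivWithinAt (X (n + 1)) (k n * X n t ^ 2 - k (n + 1) * X (n + 1) t * X (n + 2) t)
      D t := by
  simpa using h.2.2.2.2.1 (n + 1) n.succ_pos t ht

theorem continuousOn (h : IsDyadicSolutionOn C k X D) (n : ℕ) : ContinuousOn (X n) D := by
  cases n with
  | zero => simpa only [funext h.2.2.2.1] using continuousOn_const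
  | succ n => exact fun t ht => (h.hasDerivWithinAt_succ n ht).continuousWithinAt

theorem sq_le_energy (h : IsDyadicSolutionOn C k X D) (n : ℕ) {t : ℝ} (ht : t ∈ D) :
    X n t ^ 2 ≤ energy X t := by
  cases n with
  | zero =>
    rw [h.2.2.2.1, sq, zero_mul]
    exact tsum_nonneg fun j => sq_nonneg _
  | succ n => exact (h.2.2.2.2.2 t ht).le_tsum n fun j _ => sq_nonneg _

theorem tendsto_atTop_zero (h : IsDyadicSolutionOn C k X D) {t : ℝ} (ht : t ∈ D) :
    Tendsto (fun n => X n t) atTop (𝓝 0) := by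
  have hsq := (h.2.2.2.2.2 t ht).tendsto_atTop_zero
  rw [← tendsto_add_atTop_iff_nat 1, tendsto_zero_iff_abs_tendsto_zero]
  simpa only [Function.comp_def, Real.sqrt_sq_eq_abs, Real.sqrt_zero] using hsq.sqrt

theorem abs_le_sqrt_energy_zero (h : IsDyadicSolutionOn C k X (Ici 0))
    (hLH : ∀ s ∈ Ici (0 : ℝ), ∀ t ∈ Ici (0 : ℝ), s < t → energy X t ≤ energy X s)
    (n : ℕ) {t : ℝ} (ht : 0 ≤ t) : |X n t| ≤ √(energy X 0) := by
  have henergy : energy X t ≤ energy X 0 := by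
    rcases ht.eq_or_lt with rfl | ht
    · exact le_rfl
    · exact hLH 0 self_mem_Ici t ht.le ht
  exact Real.abs_le_sqrt ((h.sq_le_energy n ht).trans henergy)

theorem nonneg_of_nonneg (h : IsDyadicSolutionOn C k X (Ici 0)) (n : ℕ) (h0 : 0 ≤ X n 0)
    {t : ℝ} (ht : 0 ≤ t) : 0 ≤ X n t := by
  cases n with
  | zero => exact (h.2.2.2.1 t).ge
  | succ n =>
    refine nonneg_of_hasDerivWithinAt_of_mul_le
      (((h.continuousOn (n + 2)).const_smul (-k (n + 1))))
      (fun s hs => h.hasDerivWithinAt_succ n hs) (fun s _ => ?_) h0 ht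
    have := h.coeff_nonneg n
    simp only [Pi.smul_apply, smul_eq_mul]
    nlinarith [sq_nonneg (X n s)]

end IsDyadicSolutionOn

theorem abs_sub_le_two_mul {a b R : ℝ} (ha : |a| ≤ R) (hb : |b| ≤ R) : |a - b| ≤ 2 * R :=
  (abs_sub _ _).trans (by linarith)

theorem abs_add_le_two_mul {a b R : ℝ} (ha : |a| ≤ R) (hb : |b| ≤ R) : |a + b| ≤ 2 * R :=
  (abs_add_le _ _).trans (by linarith)

theorem neg_mul_add_le_pow_mul {c a b C R : ℝ} {m n₀ : ℕ} (hc₀ : 0 ≤ c) (hc : c ≤ C * 2 ^ m)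
    (ha : |a| ≤ R) (hb : |b| ≤ R) (htail : n₀ ≤ m → 0 ≤ a ∧ 0 ≤ b) :
    -(c * (a + b)) ≤ C * 2 ^ n₀ * (2 * R) := by
  have hC : 0 ≤ C := nonneg_of_mul_nonneg_left (hc₀.trans hc) (by positivity)
  have hR : 0 ≤ R := (abs_nonneg a).trans ha
  rcases lt_or_ge m n₀ with hm | hm
  · have hab : -(a + b) ≤ 2 * R := by linarith [neg_abs_le a, neg_abs_le b]
    calc -(c * (a + b)) = c * -(a + b) := by ring
      _ ≤ c * (2 * R) := by gcongr
      _ ≤ C * 2 ^ n₀ * (2 * R) := by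
        gcongr
        exact hc.trans (by gcongr; norm_num)
  · obtain ⟨ha₀, hb₀⟩ := htail hm
    have : 0 ≤ c * (a + b) := by positivity
    have : 0 ≤ C * 2 ^ n₀ * (2 * R) := by positivity
    linarith

noncomputable def weightedSqDistTrunc (X Y : ℕ → ℝ → ℝ) (N : ℕ) (t : ℝ) : ℝ :=
  ∑ n ∈ Finset.range N, (2 : ℝ)⁻¹ ^ (n + 1) * (X (n + 1) t - Y (n + 1) t) ^ 2

-- The weight `2⁻¹ ^ n` is what makes the boundary flux `2⁻¹ ^ N * k N` bounded by `C`.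
noncomputable def weightedSqDist (X Y : ℕ → ℝ → ℝ) (t : ℝ) : ℝ :=
  ∑' n, (2 : ℝ)⁻¹ ^ (n + 1) * (X (n + 1) t - Y (n + 1) t) ^ 2

-- Summation by parts of `∑ 2⁻¹ ^ (n + 1) * 2 (X - Y) (X' - Y')` along two dyadic solutions.
noncomputable def weightedSqDistTruncDeriv (k : ℕ → ℝ) (X Y : ℕ → ℝ → ℝ) (N : ℕ) (t : ℝ) : ℝ :=
  -((2 : ℝ)⁻¹ ^ N * k N * (X N t + Y N t) * (X N t - Y N t) * (X (N + 1) t - Y (N + 1) t)) -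
    ∑ n ∈ Finset.range N, (2 : ℝ)⁻¹ ^ (n + 1) * k (n + 1) * (X (n + 2) t + Y (n + 2) t) *
      (X (n + 1) t - Y (n + 1) t) ^ 2

section WeightedSqDist

variable {C R K t : ℝ} {k : ℕ → ℝ} {X Y : ℕ → ℝ → ℝ} {D : Set ℝ}

theorem hasDerivWithinAt_weightedSqDistTrunc (h₁ : IsDyadicSolutionOn C k X D)
    (h₂ : IsDyadicSolutionOn C k Y D) (N : ℕ) (ht : t ∈ D) :
    HasDerivWithinAt (weightedSqDistTrunc X Y N) (weightedSqDistTruncDeriv k X Y N t) D t := by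
  induction N with
  | zero =>
    have hzero : weightedSqDistTrunc X Y 0 = fun _ => 0 := funext fun _ => Finset.sum_range_zero _
    simpa [hzero, weightedSqDistTruncDeriv, h₁.2.1] using hasDerivWithinAt_const t D (0 : ℝ)
  | succ N ih =>
    have hsucc : weightedSqDistTrunc X Y (N + 1) = fun s => weightedSqDistTrunc X Y N s +
        (2 : ℝ)⁻¹ ^ (N + 1) * (X (N + 1) s - Y (N + 1) s) ^ 2 :=
      funext fun _ => Finset.sum_range_succ _ _
    have hterm := (((h₁.hasDerivWithinAt_succ N ht).fun_sub
      (h₂.hasDerivWithinAt_succ N ht)).fun_pow 2).const_mul ((2 : ℝ)⁻¹ ^ (N + 1))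
    rw [hsucc]
    refine (ih.fun_add hterm).congr_deriv ?_
    simp only [weightedSqDistTruncDeriv, Finset.sum_range_succ]
    ring

theorem continuousOn_weightedSqDistTruncDeriv (h₁ : IsDyadicSolutionOn C k X D)
    (h₂ : IsDyadicSolutionOn C k Y D) (N : ℕ) :
    ContinuousOn (weightedSqDistTruncDeriv k X Y N) D := by
  have := h₁.continuousOn
  have := h₂.continuousOn
  unfold weightedSqDistTruncDeriv
  fun_prop

theorem weightedSqDistTrunc_eq_integral (h₁ : IsDyadicSolutionOn C k X (Ici 0))
    (h₂ : IsDyadicSolutionOn C k Y (Ici 0)) (h0 : ∀ n, X n 0 = Y n 0) (N : ℕ) (ht : 0 ≤ t) :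
    weightedSqDistTrunc X Y N t = ∫ s in (0 : ℝ)..t, weightedSqDistTruncDeriv k X Y N s := by
  have hderiv s (hs : 0 ≤ s) := hasDerivWithinAt_weightedSqDistTrunc h₁ h₂ N (mem_Ici.2 hs)
  rw [intervalIntegral.integral_eq_sub_of_hasDerivAt_of_le ht
    (fun s hs => (hderiv s hs.1).continuousWithinAt.mono Icc_subset_Ici_self)
    (fun s hs => (hderiv s hs.1.le).hasDerivAt (Ici_mem_nhds hs.1))
    (((continuousOn_weightedSqDistTruncDeriv h₁ h₂ N).mono
      Icc_subset_Ici_self).intervalIntegrable_of_Icc ht)]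
  simp [weightedSqDistTrunc, h0]

theorem weightedSqDistTruncDeriv_le (hk₀ : ∀ n, 0 ≤ k n) (hk : ∀ n, k n ≤ C * 2 ^ n)
    (hX : ∀ n, |X n t| ≤ R) (hY : ∀ n, |Y n t| ≤ R)
    (hK : ∀ n, -(k (n + 1) * (X (n + 2) t + Y (n + 2) t)) ≤ K) (N : ℕ) :
    weightedSqDistTruncDeriv k X Y N t ≤
      4 * C * R ^ 2 * |X N t - Y N t| + K * weightedSqDistTrunc X Y N t := by
  have hC : 0 ≤ C := by simpa using (hk₀ 0).trans (hk 0)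
  have hweight : (2 : ℝ)⁻¹ ^ N * k N ≤ C :=
    calc (2 : ℝ)⁻¹ ^ N * k N ≤ (2 : ℝ)⁻¹ ^ N * (C * 2 ^ N) := by gcongr; exact hk N
      _ = C := by rw [inv_pow]; field_simp
  have hprod : |(X N t + Y N t) * (X (N + 1) t - Y (N + 1) t)| ≤ 4 * R ^ 2 := by
    rw [abs_mul]
    nlinarith [abs_add_le_two_mul (hX N) (hY N), abs_sub_le_two_mul (hX (N + 1)) (hY (N + 1)),
      abs_nonneg (X N t + Y N t)]
  have hboundary : -((2 : ℝ)⁻¹ ^ N * k N * (X N t + Y N t) * (X N t - Y N t) *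
      (X (N + 1) t - Y (N + 1) t)) ≤ 4 * C * R ^ 2 * |X N t - Y N t| := by
    calc _ = -((2 : ℝ)⁻¹ ^ N * k N * ((X N t + Y N t) * (X (N + 1) t - Y (N + 1) t)) *
          (X N t - Y N t)) := by ring
      _ ≤ (2 : ℝ)⁻¹ ^ N * k N * |(X N t + Y N t) * (X (N + 1) t - Y (N + 1) t)| *
          |X N t - Y N t| := by
        refine (neg_le_abs _).trans_eq ?_
        rw [abs_mul, abs_mul, abs_of_nonneg (by have := hk₀ N; positivity)]
      _ ≤ C * (4 * R ^ 2) * |X N t - Y N t| := by gcongr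
      _ = 4 * C * R ^ 2 * |X N t - Y N t| := by ring
  have hbulk : -∑ n ∈ Finset.range N, (2 : ℝ)⁻¹ ^ (n + 1) * k (n + 1) *
      (X (n + 2) t + Y (n + 2) t) * (X (n + 1) t - Y (n + 1) t) ^ 2 ≤
      K * weightedSqDistTrunc X Y N t := by
    rw [weightedSqDistTrunc, Finset.mul_sum, ← Finset.sum_neg_distrib]
    refine Finset.sum_le_sum fun n _ => ?_
    have := mul_le_mul_of_nonneg_left (hK n)
      (by positivity : 0 ≤ (2 : ℝ)⁻¹ ^ (n + 1) * (X (n + 1) t - Y (n + 1) t) ^ 2)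
    linarith
  unfold weightedSqDistTruncDeriv
  linarith

theorem weighted_sq_sub_le (hX : ∀ n, |X n t| ≤ R) (hY : ∀ n, |Y n t| ≤ R) (n : ℕ) :
    (2 : ℝ)⁻¹ ^ (n + 1) * (X (n + 1) t - Y (n + 1) t) ^ 2 ≤ (2 : ℝ)⁻¹ ^ (n + 1) * (2 * R) ^ 2 := by
  rw [← sq_abs (X (n + 1) t - Y (n + 1) t)]
  gcongr
  exact abs_sub_le_two_mul (hX _) (hY _)

theorem summable_weighted_geometric (c : ℝ) : Summable fun n : ℕ => (2 : ℝ)⁻¹ ^ (n + 1) * c :=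
  ((summable_nat_add_iff 1).2
    (summable_geometric_of_lt_one (by norm_num) (by norm_num))).mul_right c

theorem summable_weightedSqDist (hX : ∀ n, |X n t| ≤ R) (hY : ∀ n, |Y n t| ≤ R) :
    Summable fun n => (2 : ℝ)⁻¹ ^ (n + 1) * (X (n + 1) t - Y (n + 1) t) ^ 2 :=
  (summable_weighted_geometric _).of_nonneg_of_le (fun _ => by positivity)
    (weighted_sq_sub_le hX hY)

theorem weightedSqDist_nonneg : 0 ≤ weightedSqDist X Y t :=
  tsum_nonneg fun _ => by positivity

theorem weightedSqDistTrunc_le_weightedSqDist (hX : ∀ n, |X n t| ≤ R) (hY : ∀ n, |Y n t| ≤ R)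
    (N : ℕ) : weightedSqDistTrunc X Y N t ≤ weightedSqDist X Y t :=
  (summable_weightedSqDist hX hY).sum_le_tsum _ fun _ _ => by positivity

theorem tendsto_weightedSqDistTrunc (hX : ∀ n, |X n t| ≤ R) (hY : ∀ n, |Y n t| ≤ R) :
    Tendsto (fun N => weightedSqDistTrunc X Y N t) atTop (𝓝 (weightedSqDist X Y t)) :=
  (summable_weightedSqDist hX hY).hasSum.tendsto_sum_nat

theorem continuousOn_weightedSqDist (h₁ : IsDyadicSolutionOn C k X D)
    (h₂ : IsDyadicSolutionOn C k Y D) (hX : ∀ n, ∀ t ∈ D, |X n t| ≤ R)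
    (hY : ∀ n, ∀ t ∈ D, |Y n t| ≤ R) : ContinuousOn (weightedSqDist X Y) D := by
  refine continuousOn_tsum (fun n => ?_) (summable_weighted_geometric ((2 * R) ^ 2))
    fun n t ht => ?_
  · exact continuousOn_const.mul (((h₁.continuousOn _).sub (h₂.continuousOn _)).pow 2)
  · rw [Real.norm_of_nonneg (by positivity)]
    exact weighted_sq_sub_le (hX · t ht) (hY · t ht) n

theorem eq_of_weightedSqDist_eq_zero (hX : ∀ n, |X n t| ≤ R) (hY : ∀ n, |Y n t| ≤ R)
    (h : weightedSqDist X Y t = 0) (n : ℕ) : X (n + 1) t = Y (n + 1) t := by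
  have hterm : (2 : ℝ)⁻¹ ^ (n + 1) * (X (n + 1) t - Y (n + 1) t) ^ 2 ≤ 0 :=
    h ▸ (summable_weightedSqDist hX hY).le_tsum n fun _ _ => by positivity
  have : (X (n + 1) t - Y (n + 1) t) ^ 2 ≤ 0 := nonpos_of_mul_nonpos_right hterm (by positivity)
  nlinarith [sq_nonneg (X (n + 1) t - Y (n + 1) t)]

theorem weightedSqDist_le_mul_integral (h₁ : IsDyadicSolutionOn C k X (Ici 0))
    (h₂ : IsDyadicSolutionOn C k Y (Ici 0)) (h0 : ∀ n, X n 0 = Y n 0)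
    (hX : ∀ n, ∀ t ∈ Ici 0, |X n t| ≤ R) (hY : ∀ n, ∀ t ∈ Ici 0, |Y n t| ≤ R) (hK₀ : 0 ≤ K)
    (hK : ∀ n, ∀ t ∈ Ici 0, -(k (n + 1) * (X (n + 2) t + Y (n + 2) t)) ≤ K) (ht : 0 ≤ t) :
    weightedSqDist X Y t ≤ K * ∫ s in (0 : ℝ)..t, weightedSqDist X Y s := by
  have hIcc : Icc 0 t ⊆ Ici (0 : ℝ) := Icc_subset_Ici_self
  have hdist_int : IntervalIntegrable (weightedSqDist X Y) volume 0 t :=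
    ((continuousOn_weightedSqDist h₁ h₂ hX hY).mono hIcc).intervalIntegrable_of_Icc ht
  have hgap_cont N : ContinuousOn (fun s => |X N s - Y N s|) (Ici 0) :=
    ((h₁.continuousOn N).sub (h₂.continuousOn N)).abs
  have hgap_int N : IntervalIntegrable (fun s => |X N s - Y N s|) volume 0 t :=
    ((hgap_cont N).mono hIcc).intervalIntegrable_of_Icc ht
  have htrunc N : weightedSqDistTrunc X Y N t ≤
      4 * C * R ^ 2 * (∫ s in (0 : ℝ)..t, |X N s - Y N s|) +
        K * ∫ s in (0 : ℝ)..t, weightedSqDist X Y s := by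
    rw [weightedSqDistTrunc_eq_integral h₁ h₂ h0 N ht, ← intervalIntegral.integral_const_mul,
      ← intervalIntegral.integral_const_mul,
      ← intervalIntegral.integral_add ((hgap_int N).const_mul _) (hdist_int.const_mul _)]
    refine intervalIntegral.integral_mono_on ht
      (((continuousOn_weightedSqDistTruncDeriv h₁ h₂ N).mono hIcc).intervalIntegrable_of_Icc ht)
      (((hgap_int N).const_mul _).add (hdist_int.const_mul _)) fun s hs => ?_
    have hXs := (hX · s hs.1)
    have hYs := (hY · s hs.1)
    calc weightedSqDistTruncDeriv k X Y N s
        ≤ 4 * C * R ^ 2 * |X N s - Y N s| + K * weightedSqDistTrunc X Y N s :=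
          weightedSqDistTruncDeriv_le h₁.coeff_nonneg h₁.coeff_le hXs hYs (hK · s hs.1) N
      _ ≤ 4 * C * R ^ 2 * |X N s - Y N s| + K * weightedSqDist X Y s := by
          gcongr; exact weightedSqDistTrunc_le_weightedSqDist hXs hYs N
  -- the boundary flux of the truncation vanishes in the limit by dominated convergence
  have hgap_lim : Tendsto (fun N => ∫ s in (0 : ℝ)..t, |X N s - Y N s|) atTop (𝓝 0) :=
    tendsto_intervalIntegral_zero_of_abs_le ht (fun N => (hgap_cont N).mono hIcc)
      (fun N s hs => (abs_abs (X N s - Y N s)).trans_le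
        (abs_sub_le_two_mul (hX N s hs.1) (hY N s hs.1)))
      fun s hs => ((h₁.tendsto_atTop_zero hs.1).sub (h₂.tendsto_atTop_zero hs.1)).abs.trans_eq
        (by simp)
  refine le_of_tendsto_of_tendsto' (tendsto_weightedSqDistTrunc (hX · t ht) (hY · t ht)) ?_ htrunc
  simpa using (hgap_lim.const_mul (4 * C * R ^ 2)).add_const
    (K * ∫ s in (0 : ℝ)..t, weightedSqDist X Y s)

end WeightedSqDist

/-- if the initial condition has at most finitely many negative
components, any two global Leray-Hopf solutions starting from it coincide. -/
theorem uniqueness_LerayHopf_finitely_many_negatives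
    (C : ℝ) (k : ℕ → ℝ) (X₁ X₂ : ℕ → ℝ → ℝ)
    (h₁ : IsDyadicSolutionOn C k X₁ (Set.Ici 0))
    (h₂ : IsDyadicSolutionOn C k X₂ (Set.Ici 0))
    (hinit : ∀ n : ℕ, X₁ n 0 = X₂ n 0)
    (hfin : {n : ℕ | X₁ n 0 < 0}.Finite)
    (hLH₁ : ∀ s ∈ Set.Ici (0 : ℝ), ∀ t ∈ Set.Ici (0 : ℝ), s < t →
      energy X₁ t ≤ energy X₁ s)
    (hLH₂ : ∀ s ∈ Set.Ici (0 : ℝ), ∀ t ∈ Set.Ici (0 : ℝ), s < t →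
      energy X₂ t ≤ energy X₂ s) :
    ∀ n : ℕ, ∀ t ∈ Set.Ici (0 : ℝ), X₁ n t = X₂ n t := by
  have henergy : energy X₂ 0 = energy X₁ 0 := by simp only [energy, hinit]
  have hX₁ n t (ht : t ∈ Ici (0 : ℝ)) : |X₁ n t| ≤ √(energy X₁ 0) :=
    h₁.abs_le_sqrt_energy_zero hLH₁ n ht
  have hX₂ n t (ht : t ∈ Ici (0 : ℝ)) : |X₂ n t| ≤ √(energy X₁ 0) :=
    henergy ▸ h₂.abs_le_sqrt_energy_zero hLH₂ n ht
  obtain ⟨n₀, hn₀⟩ := hfin.bddAbove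
  have htail t (ht : t ∈ Ici (0 : ℝ)) n (hn : n₀ < n) : 0 ≤ X₁ n t ∧ 0 ≤ X₂ n t := by
    have h0 : 0 ≤ X₁ n 0 := not_lt.1 fun hneg => (hn₀ hneg).not_gt hn
    exact ⟨h₁.nonneg_of_nonneg n h0 ht, h₂.nonneg_of_nonneg n (hinit n ▸ h0) ht⟩
  have hK n t (ht : t ∈ Ici (0 : ℝ)) :
      -(k (n + 1) * (X₁ (n + 2) t + X₂ (n + 2) t)) ≤ C * 2 ^ n₀ * (2 * √(energy X₁ 0)) :=
    neg_mul_add_le_pow_mul (h₁.coeff_nonneg _) (h₁.coeff_le _) (hX₁ _ t ht) (hX₂ _ t ht)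
      fun hn => htail t ht _ (by omega)
  have hdist t (ht : t ∈ Ici (0 : ℝ)) : weightedSqDist X₁ X₂ t = 0 :=
    eq_zero_of_le_mul_integral (continuousOn_weightedSqDist h₁ h₂ hX₁ hX₂)
      (fun _ _ => weightedSqDist_nonneg)
      (fun s hs => weightedSqDist_le_mul_integral h₁ h₂ hinit hX₁ hX₂
        (by have := h₁.1; positivity) hK hs) ht
  rintro (_ | n) t ht
  · rw [h₁.2.2.2.1, h₂.2.2.2.1]
  · exact eq_of_weightedSqDist_eq_zero (hX₁ · t ht) (hX₂ · t ht) (hdist t ht) n
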